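/- For a < b with b - a < 2π, the space U = span{1, x, cos x, sin x} restricted to [a,b] satisfies: every nonzero element of DU = span{1, cos x, sin x} has at most 2 zeros in [a,b] counted with multiplicities (up to 3); i.e., DU is a 3-dimensional EC-space on [a,b]. -/

import Mathlib

def VanishesTo (F : ℝ → ℝ) (x : ℝ) (μ : ℕ) : Prop :=
  ∀ r < μ, iteratedDeriv r F x = 0

def AtMostZeros (m : ℕ) (I : Set ℝ) (F : ℝ → ℝ) : Prop :=
  ∀ (h : ℕ) (τ : Fin h → ℝ) (μ : Fin h → ℕ),
    Function.Injective τ → (∀ j, τ j ∈ I) → (∀ j, 1 ≤ μ j ∧ μ j ≤ m) →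
    (∑ j, μ j) = m → ¬ (∀ j, VanishesTo F (τ j) (μ j))

/-!
In the coordinates `c = (c₀, c₁, c₂)` of `f = c₀ + c₁ cos + c₂ sin`, the values `f x`, `f' x`,
`f'' x` are the dot products of `c` with `(1, cos x, sin x)`, `(0, -sin x, cos x)`,
`(0, -cos x, -sin x)`. Three zeros of `f` counted with multiplicity thus give a homogeneous
`3 × 3` system for `c`, whose determinant is `1` for a triple zero `x`,
`2 sin² ((y - x) / 2)` for a double zero `x` and a simple zero `y`, and
`4 sin ((y - x) / 2) sin ((z - y) / 2) sin ((z - x) / 2)` for simple zeros `x, y, z`.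
These do not vanish for distinct nodes less than `2π` apart, forcing `c = 0`.
-/

open Real Matrix

lemma VanishesTo.mono {F : ℝ → ℝ} {x : ℝ} {μ ν : ℕ} (h : VanishesTo F x μ) (hνμ : ν ≤ μ) :
    VanishesTo F x ν :=
  fun r hr => h r (hr.trans_le hνμ)

lemma eq_zero_of_det_ne_zero_of_dotProduct_eq_zero {R : Type*} [CommRing R] [NoZeroDivisors R]
    {r₀ r₁ r₂ c : Fin 3 → R} (hdet : (of ![r₀, r₁, r₂]).det ≠ 0)
    (h₀ : r₀ ⬝ᵥ c = 0) (h₁ : r₁ ⬝ᵥ c = 0) (h₂ : r₂ ⬝ᵥ c = 0) : c = 0 :=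
  eq_zero_of_mulVec_eq_zero hdet <| funext fun i => by fin_cases i <;> assumption

lemma sin_half_ne_zero {t : ℝ} (h₀ : t ≠ 0) (h : |t| < 2 * π) : sin (t / 2) ≠ 0 := by
  obtain ⟨hlo, hhi⟩ := abs_lt.mp h
  rw [Ne, sin_eq_zero_iff_of_lt_of_lt (by linarith) (by linarith)]
  exact div_ne_zero h₀ two_ne_zero

lemma sin_two_mul_add_sin_two_mul_sub_sin_two_mul_add (a b : ℝ) :
    sin (2 * a) + sin (2 * b) - sin (2 * (a + b)) = 4 * sin a * sin b * sin (a + b) := by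
  rw [sin_two_mul, sin_two_mul, sin_two_mul, sin_add, cos_add]
  linear_combination (-2 * sin a * cos a) * sin_sq_add_cos_sq b
    + (-2 * sin b * cos b) * sin_sq_add_cos_sq a

noncomputable section

def cycloidal (c : Fin 3 → ℝ) (x : ℝ) : ℝ := c 0 + c 1 * cos x + c 2 * sin x

def evalRow (x : ℝ) : Fin 3 → ℝ := ![1, cos x, sin x]

def derivRow (x : ℝ) : Fin 3 → ℝ := ![0, -sin x, cos x]

def deriv2Row (x : ℝ) : Fin 3 → ℝ := ![0, -cos x, -sin x]

end

section Rows

variable (c : Fin 3 → ℝ) (x : ℝ)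

lemma evalRow_dotProduct : evalRow x ⬝ᵥ c = c 0 + cos x * c 1 + sin x * c 2 := by
  simp [evalRow, dotProduct, Fin.sum_univ_three]

lemma derivRow_dotProduct : derivRow x ⬝ᵥ c = -sin x * c 1 + cos x * c 2 := by
  simp [derivRow, dotProduct, Fin.sum_univ_three]

lemma deriv2Row_dotProduct : deriv2Row x ⬝ᵥ c = -cos x * c 1 - sin x * c 2 := by
  simp only [deriv2Row, dotProduct, Fin.sum_univ_three, cons_val_zero, cons_val_one, cons_val_two,
    tail_cons, head_cons]
  ring

lemma cycloidal_eq_evalRow_dotProduct : cycloidal c x = evalRow x ⬝ᵥ c := by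
  rw [cycloidal, evalRow_dotProduct]
  ring

lemma hasDerivAt_cycloidal : HasDerivAt (cycloidal c) (derivRow x ⬝ᵥ c) x := by
  rw [derivRow_dotProduct]
  exact (((hasDerivAt_cos x).const_mul (c 1)).const_add (c 0) |>.add
    ((hasDerivAt_sin x).const_mul (c 2))).congr_deriv (by ring)

lemma hasDerivAt_derivRow_dotProduct :
    HasDerivAt (fun y => derivRow y ⬝ᵥ c) (deriv2Row x ⬝ᵥ c) x := by
  simp only [derivRow_dotProduct, deriv2Row_dotProduct]
  exact (((hasDerivAt_sin x).neg.mul_const (c 1)).add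
    ((hasDerivAt_cos x).mul_const (c 2))).congr_deriv (by ring)

variable {c x}

lemma VanishesTo.evalRow_dotProduct_eq_zero (h : VanishesTo (cycloidal c) x 1) :
    evalRow x ⬝ᵥ c = 0 := by
  have := h 0 one_pos
  rwa [iteratedDeriv_zero, cycloidal_eq_evalRow_dotProduct] at this

lemma VanishesTo.derivRow_dotProduct_eq_zero (h : VanishesTo (cycloidal c) x 2) :
    derivRow x ⬝ᵥ c = 0 := by
  have := h 1 one_lt_two
  rwa [iteratedDeriv_one, (hasDerivAt_cycloidal c x).deriv] at this

lemma VanishesTo.deriv2Row_dotProduct_eq_zero (h : VanishesTo (cycloidal c) x 3) :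
    deriv2Row x ⬝ᵥ c = 0 := by
  have := h 2 (by norm_num)
  have hderiv : deriv (cycloidal c) = fun y => derivRow y ⬝ᵥ c :=
    funext fun y => (hasDerivAt_cycloidal c y).deriv
  rwa [iteratedDeriv_succ, iteratedDeriv_one, hderiv,
    (hasDerivAt_derivRow_dotProduct c x).deriv] at this

end Rows

section Determinants

lemma det_evalRow_derivRow_deriv2Row (x : ℝ) :
    (of ![evalRow x, derivRow x, deriv2Row x]).det = 1 := by
  simp only [det_fin_three, of_apply, evalRow, derivRow, deriv2Row, cons_val_zero, cons_val_one,
    cons_val_two, tail_cons, head_cons]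
  linear_combination sin_sq_add_cos_sq x

lemma det_evalRow_derivRow_evalRow (x y : ℝ) :
    (of ![evalRow x, derivRow x, evalRow y]).det = 2 * sin ((y - x) / 2) ^ 2 := by
  rw [sin_sq_eq_half_sub, mul_div_cancel₀ _ two_ne_zero, cos_sub]
  simp only [det_fin_three, of_apply, evalRow, derivRow, cons_val_zero, cons_val_one,
    cons_val_two, tail_cons, head_cons]
  linear_combination sin_sq_add_cos_sq x

lemma det_evalRow_evalRow_evalRow (x y z : ℝ) :
    (of ![evalRow x, evalRow y, evalRow z]).det =
      4 * sin ((y - x) / 2) * sin ((z - y) / 2) * sin ((z - x) / 2) := by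
  have h := sin_two_mul_add_sin_two_mul_sub_sin_two_mul_add ((y - x) / 2) ((z - y) / 2)
  rw [show (y - x) / 2 + (z - y) / 2 = (z - x) / 2 by ring] at h
  simp only [mul_div_cancel₀ _ (two_ne_zero' ℝ), sin_sub] at h
  rw [← h]
  simp only [det_fin_three, of_apply, evalRow, cons_val_zero, cons_val_one,
    cons_val_two, tail_cons, head_cons]
  ring

end Determinants

section Unisolvence

variable {c : Fin 3 → ℝ} {x y z : ℝ}

theorem eq_zero_of_vanishesTo_cycloidal_three (hx : VanishesTo (cycloidal c) x 3) : c = 0 :=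
  eq_zero_of_det_ne_zero_of_dotProduct_eq_zero
    (by rw [det_evalRow_derivRow_deriv2Row]; exact one_ne_zero)
    (hx.mono (by norm_num)).evalRow_dotProduct_eq_zero
    (hx.mono (by norm_num)).derivRow_dotProduct_eq_zero
    hx.deriv2Row_dotProduct_eq_zero

theorem eq_zero_of_vanishesTo_cycloidal_two_one (hxy : x ≠ y) (hd : |y - x| < 2 * π)
    (hx : VanishesTo (cycloidal c) x 2) (hy : VanishesTo (cycloidal c) y 1) : c = 0 := by
  have hdet : (of ![evalRow x, derivRow x, evalRow y]).det ≠ 0 := by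
    rw [det_evalRow_derivRow_evalRow]
    have := sin_half_ne_zero (sub_ne_zero.2 hxy.symm) hd
    positivity
  exact eq_zero_of_det_ne_zero_of_dotProduct_eq_zero hdet
    (hx.mono one_le_two).evalRow_dotProduct_eq_zero hx.derivRow_dotProduct_eq_zero
    hy.evalRow_dotProduct_eq_zero

theorem eq_zero_of_vanishesTo_cycloidal_one_one_one (hxy : x ≠ y) (hyz : y ≠ z) (hxz : x ≠ z)
    (dxy : |y - x| < 2 * π) (dyz : |z - y| < 2 * π) (dxz : |z - x| < 2 * π)
    (hx : VanishesTo (cycloidal c) x 1) (hy : VanishesTo (cycloidal c) y 1)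
    (hz : VanishesTo (cycloidal c) z 1) : c = 0 := by
  have hdet : (of ![evalRow x, evalRow y, evalRow z]).det ≠ 0 := by
    rw [det_evalRow_evalRow_evalRow]
    have := sin_half_ne_zero (sub_ne_zero.2 hxy.symm) dxy
    have := sin_half_ne_zero (sub_ne_zero.2 hyz.symm) dyz
    have := sin_half_ne_zero (sub_ne_zero.2 hxz.symm) dxz
    positivity
  exact eq_zero_of_det_ne_zero_of_dotProduct_eq_zero hdet
    hx.evalRow_dotProduct_eq_zero hy.evalRow_dotProduct_eq_zero hz.evalRow_dotProduct_eq_zero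

end Unisolvence

theorem stmt_12_general (a b : ℝ) (hlen : b - a < 2 * Real.pi)
    (c₀ c₁ c₂ : ℝ) (hc : ¬(c₀ = 0 ∧ c₁ = 0 ∧ c₂ = 0)) :
    AtMostZeros 3 (Set.Icc a b) (fun x => c₀ + c₁ * Real.cos x + c₂ * Real.sin x) := by
  intro h τ μ hinj hmem hbound hsum hvan
  change ∀ j, VanishesTo (cycloidal ![c₀, c₁, c₂]) (τ j) (μ j) at hvan
  suffices ![c₀, c₁, c₂] = 0 from hc ⟨congrFun this 0, congrFun this 1, congrFun this 2⟩
  have hdist (i j : Fin h) : |τ j - τ i| < 2 * π :=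
    (Real.dist_le_of_mem_Icc (hmem j) (hmem i)).trans_lt hlen
  have hsimple (j : Fin h) : VanishesTo (cycloidal ![c₀, c₁, c₂]) (τ j) 1 :=
    (hvan j).mono (hbound j).1
  have hh : h ≤ 3 := by
    simpa [hsum] using Finset.card_nsmul_le_sum Finset.univ μ 1 fun j _ => (hbound j).1
  interval_cases h
  · simp at hsum
  · rw [Fin.sum_univ_one] at hsum
    exact eq_zero_of_vanishesTo_cycloidal_three (hsum ▸ hvan 0)
  · rw [Fin.sum_univ_two] at hsum
    obtain h₀ | h₁ : 2 ≤ μ 0 ∨ 2 ≤ μ 1 := by omega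
    · exact eq_zero_of_vanishesTo_cycloidal_two_one (hinj.ne (by decide)) (hdist 0 1)
        ((hvan 0).mono h₀) (hsimple 1)
    · exact eq_zero_of_vanishesTo_cycloidal_two_one (hinj.ne (by decide)) (hdist 1 0)
        ((hvan 1).mono h₁) (hsimple 0)
  · exact eq_zero_of_vanishesTo_cycloidal_one_one_one (hinj.ne (by decide))
      (hinj.ne (by decide)) (hinj.ne (by decide)) (hdist 0 1) (hdist 1 2) (hdist 0 2)
      (hsimple 0) (hsimple 1) (hsimple 2)

theorem stmt_12 (a b : ℝ) (hab : a < b) (hlen : b - a < 2 * Real.pi)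
    (c₀ c₁ c₂ : ℝ) (hc : ¬(c₀ = 0 ∧ c₁ = 0 ∧ c₂ = 0)) :
    AtMostZeros 3 (Set.Icc a b) (fun x => c₀ + c₁ * Real.cos x + c₂ * Real.sin x) :=
  stmt_12_general a b hlen c₀ c₁ c₂ hc
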